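/- For integers r ≥ 0, m ≥ 1, n ≥ 1 and real p > 0, Σ_{1 ≤ k_m ≤ ⋯ ≤ k_1 ≤ n} 1/((k_1 + r)^p (k_2 + r)^p ⋯ (k_m + r)^p) = Σ_{i+j=m, i,j ≥ 0} (−1)^i · ζ_r({p}_i) · ζ_{n+r}^⋆({p}_j). -/

import Mathlib

open Finset

/-- Multiple harmonic number `ζ_n({1}_m)`:
`ζ_n({1}_m) = ∑_{n ≥ n₁ > n₂ > ⋯ > n_m ≥ 1} 1/(n₁ ⋯ n_m)`, with `ζ_n({1}_0) = 1`. -/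
noncomputable def mhn : ℕ → ℕ → ℝ
  | _, 0 => 1
  | n, m + 1 => ∑ k ∈ Finset.Icc 1 n, mhn (k - 1) m / (k : ℝ)

/-- Multiple harmonic star number `ζ_n^⋆({1}_m)`:
`ζ_n^⋆({1}_m) = ∑_{n ≥ n₁ ≥ n₂ ≥ ⋯ ≥ n_m ≥ 1} 1/(n₁ ⋯ n_m)`, with `ζ_n^⋆({1}_0) = 1`. -/
noncomputable def mhsn : ℕ → ℕ → ℝ
  | _, 0 => 1
  | n, m + 1 => ∑ k ∈ Finset.Icc 1 n, mhsn k m / (k : ℝ)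

/-- Multiple harmonic number with repeated real argument `p`: `ζ_n({p}_m)`. -/
noncomputable def mhnP (p : ℝ) : ℕ → ℕ → ℝ
  | _, 0 => 1
  | n, m + 1 => ∑ k ∈ Finset.Icc 1 n, mhnP p (k - 1) m / (k : ℝ) ^ p

/-- Multiple harmonic star number with repeated real argument `p`: `ζ_n^⋆({p}_m)`. -/
noncomputable def mhsnP (p : ℝ) : ℕ → ℕ → ℝ
  | _, 0 => 1
  | n, m + 1 => ∑ k ∈ Finset.Icc 1 n, mhsnP p k m / (k : ℝ) ^ p

/-- Generalized harmonic number `H_n^{(p)} = ∑_{j=1}^n 1/j^p`. -/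
noncomputable def genH (p n : ℕ) : ℝ := ∑ j ∈ Finset.Icc 1 n, 1 / (j : ℝ) ^ p

/-- Auxiliary: `hypAux m n k = h_n^{(m+1)}(k)` for `k ≥ 1` (peel off the weak outer indices). -/
noncomputable def hypAux : ℕ → ℕ → ℕ → ℝ
  | 0, n, k => mhn n k
  | m + 1, n, k => ∑ j ∈ Finset.Icc 1 n, hypAux m j k

/-- Generalized hyperharmonic number `h_n^{(m)}(k)`, with the convention
`h_n^{(m)}(0) = C(m+n-1, m-1)`. -/
noncomputable def gh (n m k : ℕ) : ℝ :=
  if k = 0 then (Nat.choose (m + n - 1) (m - 1) : ℝ) else hypAux (m - 1) n k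

/-- Unsigned Stirling number of the first kind, defined by the standard recurrence,
equivalently by `x(x+1)⋯(x+n-1) = ∑_{k=0}^n [n; k] xᵏ`. -/
def stir1 : ℕ → ℕ → ℕ
  | 0, 0 => 1
  | 0, _ + 1 => 0
  | _ + 1, 0 => 0
  | n + 1, k + 1 => stir1 n k + n * stir1 n (k + 1)

/-- Multiple zeta value `ζ(p, {1}_m)`. -/
noncomputable def mzv (p m : ℕ) : ℝ := ∑' n : ℕ, mhn n m / (n + 1 : ℝ) ^ p

/-- Multiple zeta star value `ζ^⋆(p, {1}_m)`. -/
noncomputable def mzvStar (p m : ℕ) : ℝ := ∑' n : ℕ, mhsn (n + 1) m / (n + 1 : ℝ) ^ p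

/-- Riemann zeta value `ζ(p) = ∑_{n=1}^∞ 1/n^p`. -/
noncomputable def rz (p : ℕ) : ℝ := ∑' n : ℕ, 1 / (n + 1 : ℝ) ^ p

/-- `U_{m,r}(p) = ∑_{n=1}^∞ ζ_{n+r}({1}_m)/n^p`. -/
noncomputable def Usum (m r p : ℕ) : ℝ := ∑' n : ℕ, mhn (n + 1 + r) m / (n + 1 : ℝ) ^ p

/-- Strictly decreasing `q`-fold sum `Ā_q(n) = ∑_{1 ≤ k_q < ⋯ < k₁ ≤ n} a_{k₁}⋯a_{k_q}`,
with `Ā_0(n) = 1` (so `Ā_q(n) = 0` when `n < q`). -/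
def sdSum {R : Type*} [Semiring R] (a : ℕ → R) : ℕ → ℕ → R
  | _, 0 => 1
  | n, q + 1 => ∑ k ∈ Finset.Icc 1 n, a k * sdSum a (k - 1) q

/-- Weakly decreasing `q`-fold sum `A_q(n) = ∑_{1 ≤ k_q ≤ ⋯ ≤ k₁ ≤ n} a_{k₁}⋯a_{k_q}`,
with `A_0(n) = 1`. -/
def wdSum {R : Type*} [Semiring R] (a : ℕ → R) : ℕ → ℕ → R
  | _, 0 => 1
  | n, q + 1 => ∑ k ∈ Finset.Icc 1 n, a k * wdSum a k q

/-! The `i`-th coefficient of `∏_{k ≤ N} (1 - a_k X)` is `(-1)ⁱ Āᵢ(N)` and the `j`-th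
coefficient of `∏_{k ≤ N} (1 - a_k X)⁻¹` is `Aⱼ(N)`, so the two generating series are inverse
to each other. Splitting a weakly decreasing chain `n + r ≥ k₁ ≥ ⋯ ≥ k_m ≥ 1` at `r` factors
the second series for `n + r` into the one for the shifted sequence `k ↦ a (k + r)` up to `n`
times the one for `a` up to `r`. Multiplying by the first series for `r` and comparing
coefficients of `Xᵐ` gives the theorem, with `a_k = 1/kᵖ`. -/

open PowerSeries

section GeneratingSeries

variable {R : Type*} [CommRing R] (a : ℕ → R)

theorem sdSum_succ_succ (N q : ℕ) :
    sdSum a (N + 1) (q + 1) = sdSum a N (q + 1) + a (N + 1) * sdSum a N q := by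
  simp only [sdSum]
  rw [sum_Icc_succ_top (by omega), Nat.add_sub_cancel]

theorem wdSum_succ_succ (N q : ℕ) :
    wdSum a (N + 1) (q + 1) = wdSum a N (q + 1) + a (N + 1) * wdSum a (N + 1) q := by
  conv_lhs => simp only [wdSum]
  rw [sum_Icc_succ_top (by omega)]
  rfl

noncomputable def sdSumSeries (N : ℕ) : R⟦X⟧ := mk fun i => (-1) ^ i * sdSum a N i

noncomputable def wdSumSeries (N : ℕ) : R⟦X⟧ := mk (wdSum a N)

theorem sdSumSeries_zero : sdSumSeries a 0 = 1 := by
  ext (_ | i) <;> simp [sdSumSeries, sdSum, coeff_one]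

theorem wdSumSeries_zero : wdSumSeries a 0 = 1 := by
  ext (_ | i) <;> simp [wdSumSeries, wdSum, coeff_one]

theorem PowerSeries.coeff_succ_mul_one_sub_C_mul_X (f : R⟦X⟧) (c : R) (i : ℕ) :
    coeff (i + 1) (f * (1 - C c * X)) = coeff (i + 1) f - c * coeff i f := by
  rw [mul_sub, mul_one, mul_left_comm, map_sub, coeff_C_mul, coeff_succ_mul_X]

theorem PowerSeries.isUnit_one_sub_C_mul_X (c : R) : IsUnit (1 - C c * X : R⟦X⟧) := by
  simp [isUnit_iff_constantCoeff]

theorem sdSumSeries_succ (N : ℕ) :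
    sdSumSeries a (N + 1) = sdSumSeries a N * (1 - C (a (N + 1)) * X) := by
  ext (_ | i)
  · simp [sdSumSeries, sdSum]
  · rw [coeff_succ_mul_one_sub_C_mul_X]
    simp only [sdSumSeries, coeff_mk, sdSum_succ_succ, pow_succ]
    ring

theorem wdSumSeries_succ_mul (N : ℕ) :
    wdSumSeries a (N + 1) * (1 - C (a (N + 1)) * X) = wdSumSeries a N := by
  ext (_ | i)
  · simp [wdSumSeries, wdSum]
  · rw [coeff_succ_mul_one_sub_C_mul_X]
    simp only [wdSumSeries, coeff_mk, wdSum_succ_succ]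
    ring

theorem sdSumSeries_mul_wdSumSeries (N : ℕ) : sdSumSeries a N * wdSumSeries a N = 1 := by
  induction N with
  | zero => rw [sdSumSeries_zero, wdSumSeries_zero, one_mul]
  | succ N ih =>
    rw [sdSumSeries_succ, mul_assoc, mul_comm (1 - _), wdSumSeries_succ_mul, ih]

theorem wdSumSeries_add (n r : ℕ) :
    wdSumSeries a (n + r) = wdSumSeries (fun k => a (k + r)) n * wdSumSeries a r := by
  induction n with
  | zero => rw [zero_add, wdSumSeries_zero, one_mul]
  | succ n ih =>
    -- cancel the unit `1 - a (n + r + 1) X`, which takes both sides down one step of `n`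
    have hu := isUnit_one_sub_C_mul_X (a (n + r + 1))
    rw [← hu.mul_left_inj, Nat.add_right_comm, wdSumSeries_succ_mul, ih, mul_right_comm,
      ← wdSumSeries_succ_mul (fun k => a (k + r)) n, Nat.add_right_comm]

theorem wdSum_comp_add_eq_sum (n r m : ℕ) :
    wdSum (fun k => a (k + r)) n m =
      ∑ i ∈ range (m + 1), (-1) ^ i * sdSum a r i * wdSum a (n + r) (m - i) := by
  have h : wdSumSeries (fun k => a (k + r)) n = sdSumSeries a r * wdSumSeries a (n + r) := by
    rw [wdSumSeries_add, mul_left_comm, sdSumSeries_mul_wdSumSeries, mul_one]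
  simpa [sdSumSeries, wdSumSeries, coeff_mul, Nat.sum_antidiagonal_eq_sum_range_succ_mk]
    using congrArg (coeff m) h

end GeneratingSeries

theorem mhnP_eq_sdSum (p : ℝ) (N i : ℕ) :
    mhnP p N i = sdSum (fun k : ℕ => 1 / (k : ℝ) ^ p) N i := by
  induction i generalizing N with
  | zero => rfl
  | succ i ih => exact sum_congr rfl fun k _ => by rw [ih, div_eq_mul_one_div, mul_comm]

theorem mhsnP_eq_wdSum (p : ℝ) (N j : ℕ) :
    mhsnP p N j = wdSum (fun k : ℕ => 1 / (k : ℝ) ^ p) N j := by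
  induction j generalizing N with
  | zero => rfl
  | succ j ih => exact sum_congr rfl fun k _ => by rw [ih, div_eq_mul_one_div, mul_comm]

theorem shifted_mhsnP_eq_general (r m n : ℕ) (p : ℝ) :
    wdSum (fun k => 1 / ((k : ℝ) + r) ^ p) n m =
      ∑ i ∈ Finset.range (m + 1), (-1 : ℝ) ^ i * mhnP p r i * mhsnP p (n + r) (m - i) := by
  have hshift :
      (fun k : ℕ => 1 / ((k : ℝ) + r) ^ p) = fun k => 1 / ((k + r : ℕ) : ℝ) ^ p := by
    simp only [Nat.cast_add]
  simp only [hshift, mhnP_eq_sdSum, mhsnP_eq_wdSum]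
  exact wdSum_comp_add_eq_sum (fun k : ℕ => 1 / (k : ℝ) ^ p) n r m

/-- Theorem 2.7, star version: for `r ≥ 0`, `m, n ≥ 1` and real `p > 0`,
`∑_{1 ≤ k_m ≤ ⋯ ≤ k₁ ≤ n} 1/((k₁+r)^p ⋯ (k_m+r)^p) = ∑_{i+j=m} (-1)^i ζ_r({p}_i) ζ_{n+r}^⋆({p}_j)`. -/
theorem shifted_mhsnP_eq (r m n : ℕ) (p : ℝ) (hm : 1 ≤ m) (hn : 1 ≤ n) (hp : 0 < p) :
    wdSum (fun k => 1 / ((k : ℝ) + r) ^ p) n m =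
      ∑ i ∈ Finset.range (m + 1), (-1 : ℝ) ^ i * mhnP p r i * mhsnP p (n + r) (m - i) :=
  shifted_mhsnP_eq_general r m n p
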